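/- Let n ≥ 1, K ≥ 1, and ρ ∈ (0, 1/2]. Let G(1), …, G(K) be communication graphs on n nodes whose product G(1) ∘ G(2) ∘ ⋯ ∘ G(K) is nonsplit, and let x(0), x(1), …, x(K) ∈ ℝ^n be such that for each 1 ≤ k ≤ K, x(k) is a ρ-safe update of x(k−1) along G(k). Then δ(x(K)) ≤ (1 − ρ^K)·δ(x(0)). (In a K-nonsplit network model, a ρ-safe averaging algorithm is (1−ρ^K)-contracting over each block of K consecutive rounds.) -/

import Mathlib

/-!
Every value stays in the initial range `[m, M]`, and a safe update keeps weight at least `ρ` on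
each in-neighbour. Following a path `r → ⋯ → p` of the product graph, after `K` rounds
`ρ ^ K * x₀ r + (1 - ρ ^ K) * m ≤ x_K p ≤ ρ ^ K * x₀ r + (1 - ρ ^ K) * M`. Taking for `r` a common
in-neighbour, in the product graph, of a maximiser and a minimiser of `x_K`, the terms in `x₀ r`
cancel and `δ(x_K) ≤ (1 - ρ ^ K) * (M - m)`. Lower bounds follow from upper bounds applied to `-x`.
-/

/-- `δ(x) = max_p x_p − min_p x_p`. -/
noncomputable def delta {n : ℕ} (x : Fin n → ℝ) : ℝ :=
  sSup (Set.range x) - sInf (Set.range x)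

/-- A communication graph is nonsplit if any two nodes have a common incoming neighbor. -/
def Nonsplit {n : ℕ} (E : Fin n → Fin n → Prop) : Prop :=
  ∀ p q, ∃ r, E r p ∧ E r q

/-- `ProdSeg G a m` is the product `G (a+1) ∘ G (a+2) ∘ ⋯ ∘ G (a+m)`, where the product
`G ∘ H` has an edge `(p,q)` iff there is `r` with `(p,r) ∈ G` and `(r,q) ∈ H`;
the empty product is the identity graph. -/
def ProdSeg {n : ℕ} (G : ℕ → Fin n → Fin n → Prop) (a : ℕ) : ℕ → Fin n → Fin n → Prop
  | 0 => fun p q => p = q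
  | m + 1 => fun p q => ∃ r, ProdSeg G a m p r ∧ G (a + m + 1) r q

/-- `x'` is a ρ-safe update of `x` along the graph `E`. -/
def SafeUpdate {n : ℕ} (ρ : ℝ) (E : Fin n → Fin n → Prop) (x x' : Fin n → ℝ) : Prop :=
  ∀ p, ρ * sSup (x '' {q | E q p}) + (1 - ρ) * sInf (x '' {q | E q p}) ≤ x' p ∧
       x' p ≤ (1 - ρ) * sSup (x '' {q | E q p}) + ρ * sInf (x '' {q | E q p})

open Set

section SafeUpdate

variable {n : ℕ} {ρ : ℝ} {E : Fin n → Fin n → Prop} {x x' : Fin n → ℝ}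

theorem SafeUpdate.neg (h : SafeUpdate ρ E x x') : SafeUpdate ρ E (-x) (-x') := by
  intro p
  have himage : (-x) '' {q | E q p} = -(x '' {q | E q p}) := by
    rw [← image_neg_eq_neg, image_image]; rfl
  rw [himage, Real.sSup_neg, Real.sInf_neg]
  constructor <;> simp only [Pi.neg_apply] <;> linarith [h p]

theorem SafeUpdate.le_of_adj (h : SafeUpdate ρ E x x') (hρ0 : 0 ≤ ρ) (hρ1 : ρ ≤ 1)
    {s p : Fin n} (hs : E s p) {b : ℝ} (hb : ∀ q, E q p → x q ≤ b) :
    x' p ≤ (1 - ρ) * b + ρ * x s := by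
  have hne : (x '' {q | E q p}).Nonempty := ⟨x s, s, hs, rfl⟩
  have hsup : sSup (x '' {q | E q p}) ≤ b := csSup_le hne (forall_mem_image.2 hb)
  have hinf : sInf (x '' {q | E q p}) ≤ x s :=
    csInf_le (toFinite _).bddBelow (mem_image_of_mem x hs)
  calc x' p ≤ (1 - ρ) * sSup (x '' {q | E q p}) + ρ * sInf (x '' {q | E q p}) := (h p).2
    _ ≤ (1 - ρ) * b + ρ * x s := by gcongr

end SafeUpdate

theorem exists_delta_eq_sub {n : ℕ} [Nonempty (Fin n)] (x : Fin n → ℝ) :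
    ∃ p q, (∀ i, x i ≤ x p) ∧ (∀ i, x q ≤ x i) ∧ delta x = x p - x q := by
  obtain ⟨p, hp⟩ := Finite.exists_max x
  obtain ⟨q, hq⟩ := Finite.exists_min x
  refine ⟨p, q, hp, hq, ?_⟩
  rw [delta, IsGreatest.csSup_eq ⟨mem_range_self p, forall_mem_range.2 hp⟩,
    IsLeast.csInf_eq ⟨mem_range_self q, forall_mem_range.2 hq⟩]

section Run

variable {n K : ℕ} {ρ : ℝ} {G : ℕ → Fin n → Fin n → Prop} {x : ℕ → Fin n → ℝ}

theorem safeUpdate_run_le (hρ0 : 0 ≤ ρ) (hρ1 : ρ ≤ 1)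
    (hrefl : ∀ k, 1 ≤ k → k ≤ K → ∀ p, G k p p)
    (hupd : ∀ k, 1 ≤ k → k ≤ K → SafeUpdate ρ (G k) (x (k - 1)) (x k))
    {b : ℝ} (hb : ∀ p, x 0 p ≤ b) {k : ℕ} (hk : k ≤ K) (p : Fin n) : x k p ≤ b := by
  induction k generalizing p with
  | zero => exact hb p
  | succ k ih =>
    have hprev : x k p ≤ b := ih (by omega) p
    have hstep : x (k + 1) p ≤ (1 - ρ) * b + ρ * x k p :=
      (hupd (k + 1) (by omega) hk).le_of_adj hρ0 hρ1 (hrefl (k + 1) (by omega) hk p)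
        fun q _ => ih (by omega) q
    nlinarith

theorem safeUpdate_run_le_of_prodSeg (hρ0 : 0 ≤ ρ) (hρ1 : ρ ≤ 1)
    (hrefl : ∀ k, 1 ≤ k → k ≤ K → ∀ p, G k p p)
    (hupd : ∀ k, 1 ≤ k → k ≤ K → SafeUpdate ρ (G k) (x (k - 1)) (x k))
    {b : ℝ} (hb : ∀ p, x 0 p ≤ b) {k : ℕ} (hk : k ≤ K) {r p : Fin n}
    (hrp : ProdSeg G 0 k r p) : x k p ≤ ρ ^ k * x 0 r + (1 - ρ ^ k) * b := by
  induction k generalizing p with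
  | zero =>
    obtain rfl : r = p := hrp
    simp
  | succ k ih =>
    obtain ⟨s, hrs, hsp⟩ := hrp
    rw [zero_add] at hsp
    have hstep := (hupd (k + 1) (by omega) hk).le_of_adj hρ0 hρ1 hsp
      fun q _ => safeUpdate_run_le hρ0 hρ1 hrefl hupd hb (by omega) q
    have hs := ih (by omega) hrs
    calc x (k + 1) p ≤ (1 - ρ) * b + ρ * x k s := hstep
      _ ≤ (1 - ρ) * b + ρ * (ρ ^ k * x 0 r + (1 - ρ ^ k) * b) := by gcongr
      _ = ρ ^ (k + 1) * x 0 r + (1 - ρ ^ (k + 1)) * b := by ring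

theorem le_safeUpdate_run_of_prodSeg (hρ0 : 0 ≤ ρ) (hρ1 : ρ ≤ 1)
    (hrefl : ∀ k, 1 ≤ k → k ≤ K → ∀ p, G k p p)
    (hupd : ∀ k, 1 ≤ k → k ≤ K → SafeUpdate ρ (G k) (x (k - 1)) (x k))
    {a : ℝ} (ha : ∀ p, a ≤ x 0 p) {k : ℕ} (hk : k ≤ K) {r p : Fin n}
    (hrp : ProdSeg G 0 k r p) : ρ ^ k * x 0 r + (1 - ρ ^ k) * a ≤ x k p := by
  have := safeUpdate_run_le_of_prodSeg (x := -x) hρ0 hρ1 hrefl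
    (fun k h1 h2 => (hupd k h1 h2).neg) (b := -a) (fun p => neg_le_neg (ha p)) hk hrp
  simp only [Pi.neg_apply] at this
  linarith

end Run

theorem K_nonsplit_contraction_general
    (n K : ℕ) (hn : 1 ≤ n) (ρ : ℝ) (hρ0 : 0 < ρ) (hρ2 : ρ ≤ 1 / 2)
    (G : ℕ → Fin n → Fin n → Prop)
    (hrefl : ∀ k, 1 ≤ k → k ≤ K → ∀ p, G k p p)
    -- the product `G 1 ∘ G 2 ∘ ⋯ ∘ G K` is nonsplit
    (hns : Nonsplit (ProdSeg G 0 K))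
    (x : ℕ → Fin n → ℝ)
    (hupd : ∀ k, 1 ≤ k → k ≤ K → SafeUpdate ρ (G k) (x (k - 1)) (x k)) :
    delta (x K) ≤ (1 - ρ ^ K) * delta (x 0) := by
  have : Nonempty (Fin n) := ⟨⟨0, hn⟩⟩
  have hρ1 : ρ ≤ 1 := by linarith
  obtain ⟨p₀, q₀, hmax₀, hmin₀, hδ₀⟩ := exists_delta_eq_sub (x 0)
  obtain ⟨p, q, -, -, hδ⟩ := exists_delta_eq_sub (x K)
  obtain ⟨r, hrp, hrq⟩ := hns p q
  have hp := safeUpdate_run_le_of_prodSeg hρ0.le hρ1 hrefl hupd hmax₀ le_rfl hrp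
  have hq := le_safeUpdate_run_of_prodSeg hρ0.le hρ1 hrefl hupd hmin₀ le_rfl hrq
  rw [hδ, hδ₀]
  linarith

theorem K_nonsplit_contraction
    (n K : ℕ) (hn : 1 ≤ n) (hK : 1 ≤ K) (ρ : ℝ) (hρ0 : 0 < ρ) (hρ2 : ρ ≤ 1 / 2)
    (G : ℕ → Fin n → Fin n → Prop)
    (hrefl : ∀ k, 1 ≤ k → k ≤ K → ∀ p, G k p p)
    -- the product `G 1 ∘ G 2 ∘ ⋯ ∘ G K` is nonsplit
    (hns : Nonsplit (ProdSeg G 0 K))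
    (x : ℕ → Fin n → ℝ)
    (hupd : ∀ k, 1 ≤ k → k ≤ K → SafeUpdate ρ (G k) (x (k - 1)) (x k)) :
    delta (x K) ≤ (1 - ρ ^ K) * delta (x 0) :=
  K_nonsplit_contraction_general n K hn ρ hρ0 hρ2 G hrefl hns x hupd
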